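/- arXiv:2302.13021 — 4 statements merged into one kernel-verified Lean document; each statement's English description precedes it below -/
import Mathlib

section
/- The function Φ(x,y) = (1/y)·(y − 1 − x²)·(1 − ((x+1)/2)·((y−1)/y)) − ((1−x)(y−1))/(2(y−x²))·(1 + 1/y) is nonnegative for all (x,y) ∈ [0,1] × [3,∞). -/
/-- The function `Φ(x,y)` from Lemma 2.1. -/
noncomputable def PhiFun (x y : ℝ) : ℝ :=
  1 / y * (y - 1 - x ^ 2) * (1 - (x + 1) / 2 * ((y - 1) / y)) -
    (1 - x) * (y - 1) / (2 * (y - x ^ 2)) * (1 + 1 / y)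

/-!
Clearing denominators, `Φ(x,y) = x · N(x,y) / (2y²(y - x²))`, where `N` is quadratic in `y`.
Expanding `N` around `y = 3` gives `N = A(x) + B(x)(y - 3) + C(x)(y - 3)²` with
`A = 12 - 20x + 10x² + 4x³ - 2x⁴`, `B = 10 - 13x + 9x² + x³ - x⁴`, `C = 2(1 - x + x²)`;
on `[0,1]` each coefficient is a positive-definite quadratic plus a nonnegative term
(`2x³ - x⁴ = x³(2 - x)`, resp. `x³ - x⁴ = x³(1 - x)`), so `N ≥ 0` for `y ≥ 3`.
-/

def phiNumerator (x y : ℝ) : ℝ :=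
  2 * y ^ 2 * (1 - x + x ^ 2) - y * (2 + x + 3 * x ^ 2 - x ^ 3 + x ^ 4) +
    (x + x ^ 2 + x ^ 3 + x ^ 4)

theorem PhiFun_eq_div {x y : ℝ} (hy : y ≠ 0) (hyx : y - x ^ 2 ≠ 0) :
    PhiFun x y = x * phiNumerator x y / (2 * y ^ 2 * (y - x ^ 2)) := by
  unfold PhiFun phiNumerator
  field_simp
  ring

theorem phiNumerator_eq_expansion_at_three (x y : ℝ) :
    phiNumerator x y =
      (12 - 20 * x + 10 * x ^ 2 + 4 * x ^ 3 - 2 * x ^ 4) +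
        (10 - 13 * x + 9 * x ^ 2 + x ^ 3 - x ^ 4) * (y - 3) +
          2 * (1 - x + x ^ 2) * (y - 3) ^ 2 := by
  unfold phiNumerator
  ring

theorem phiNumerator_nonneg {x y : ℝ} (hx0 : 0 ≤ x) (hx1 : x ≤ 1) (hy : 3 ≤ y) :
    0 ≤ phiNumerator x y := by
  have hcube : 0 ≤ x ^ 3 := pow_nonneg hx0 3
  have hA : 0 ≤ 12 - 20 * x + 10 * x ^ 2 + 4 * x ^ 3 - 2 * x ^ 4 := by
    nlinarith [mul_nonneg hcube (by linarith : (0 : ℝ) ≤ 2 - x), sq_nonneg (x - 1)]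
  have hB : 0 ≤ 10 - 13 * x + 9 * x ^ 2 + x ^ 3 - x ^ 4 := by
    nlinarith [mul_nonneg hcube (by linarith : (0 : ℝ) ≤ 1 - x), sq_nonneg (3 * x - 2)]
  have hC : 0 ≤ 2 * (1 - x + x ^ 2) := by nlinarith [sq_nonneg (x - 1)]
  rw [phiNumerator_eq_expansion_at_three]
  have ht : 0 ≤ y - 3 := by linarith
  positivity

theorem Phi_nonneg : ∀ x y : ℝ, x ∈ Set.Icc (0 : ℝ) 1 → y ∈ Set.Ici (3 : ℝ) →
    0 ≤ PhiFun x y := by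
  rintro x y ⟨hx0, hx1⟩ hy
  have hy3 : 3 ≤ y := hy
  have hyx : 0 < y - x ^ 2 := by nlinarith
  rw [PhiFun_eq_div (by linarith) hyx.ne']
  exact div_nonneg (mul_nonneg hx0 (phiNumerator_nonneg hx0 hx1 hy3)) (by positivity)
end

section
/- The SFTR-1/2 weights satisfy ω_0 > 0 and ω_m < 0 for every integer m ≥ 1. -/
/-- The SFTR-1/2 weights `ω_m`. -/
noncomputable def sftrW (α : ℝ) : ℕ → ℝ
  | 0 => (2 * α / (α + 1)) ^ α
  | 1 => -α * (2 * α / (α + 1)) ^ (α + 1)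
  | (m + 2) =>
      2 * α / (((m : ℝ) + 2) * (α + 1)) *
        (((((m : ℝ) + 2) - 1) / α - α) * sftrW α (m + 1) +
          (α - 1) / (2 * α) * (((m : ℝ) + 2) - 2) * sftrW α m)

/-!
The weights decay geometrically in the one-sided sense `ω_{m+1} ≤ (1 - α) ω_m`. Clearing
denominators in the recurrence shows that the defect `ω_{m+2} - (1 - α) ω_{m+1}` is a positive
multiple of `m ((1 + α²) ω_{m+1} - (1 - α) ω_m)`, which is `≤ m α² ω_{m+1} ≤ 0` once the bound
holds at the previous index and `ω_{m+1} ≤ 0`. Since `ω_1 < 0 < ω_0` and `1 - α > 0`, induction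
propagates both the bound and the negativity.
-/

section

variable {α : ℝ}

theorem sftrW_zero_pos (hα : 0 < α) : 0 < sftrW α 0 :=
  Real.rpow_pos_of_pos (by positivity) α

theorem sftrW_one_neg (hα : 0 < α) : sftrW α 1 < 0 := by
  have hpow : 0 < (2 * α / (α + 1)) ^ (α + 1) := Real.rpow_pos_of_pos (by positivity) _
  simp only [sftrW, neg_mul]
  exact neg_neg_of_pos (mul_pos hα hpow)

theorem sftrW_add_two_sub_eq (hα : α ≠ 0) (hα' : α + 1 ≠ 0) (m : ℕ) :
    ((m : ℝ) + 2) * (α + 1) * (sftrW α (m + 2) - (1 - α) * sftrW α (m + 1)) =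
      m * ((1 + α ^ 2) * sftrW α (m + 1) - (1 - α) * sftrW α m) := by
  have hm : (m : ℝ) + 2 ≠ 0 := by positivity
  simp only [sftrW]
  field_simp
  ring

theorem sftrW_add_two_le (hα : 0 < α) {m : ℕ} (hneg : sftrW α (m + 1) ≤ 0)
    (hle : sftrW α (m + 1) ≤ (1 - α) * sftrW α m) :
    sftrW α (m + 2) ≤ (1 - α) * sftrW α (m + 1) := by
  have hpos : 0 < ((m : ℝ) + 2) * (α + 1) := by positivity
  have hdefect : (1 + α ^ 2) * sftrW α (m + 1) - (1 - α) * sftrW α m ≤ 0 := by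
    linarith [mul_nonpos_of_nonneg_of_nonpos (sq_nonneg α) hneg]
  have hprod : ((m : ℝ) + 2) * (α + 1) * (sftrW α (m + 2) - (1 - α) * sftrW α (m + 1)) ≤ 0 := by
    rw [sftrW_add_two_sub_eq hα.ne' (by positivity)]
    exact mul_nonpos_of_nonneg_of_nonpos m.cast_nonneg hdefect
  have := nonpos_of_mul_nonpos_right hprod hpos
  linarith

theorem sftrW_succ_neg_and_le (hα : α ∈ Set.Ioo (0 : ℝ) 1) (m : ℕ) :
    sftrW α (m + 1) < 0 ∧ sftrW α (m + 1) ≤ (1 - α) * sftrW α m := by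
  obtain ⟨hα0, hα1⟩ := hα
  induction m with
  | zero =>
    have hω₁ := sftrW_one_neg hα0
    exact ⟨hω₁, hω₁.le.trans (mul_pos (by linarith) (sftrW_zero_pos hα0)).le⟩
  | succ m ih =>
    obtain ⟨hneg, hle⟩ := ih
    have hstep := sftrW_add_two_le hα0 hneg.le hle
    exact ⟨hstep.trans_lt (mul_neg_of_pos_of_neg (by linarith) hneg), hstep⟩

end

theorem sftrW_sign (α : ℝ) (hα : α ∈ Set.Ioo (0 : ℝ) 1) :
    0 < sftrW α 0 ∧ ∀ m : ℕ, 1 ≤ m → sftrW α m < 0 := by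
  refine ⟨sftrW_zero_pos hα.1, fun m hm => ?_⟩
  obtain ⟨k, rfl⟩ := Nat.exists_eq_add_of_le' hm
  exact (sftrW_succ_neg_and_le hα k).1
end

section
/- The SFTR-1/2 weights are strictly increasing from index 1 on: ω_m > ω_{m−1} for every integer m ≥ 2. -/
/-!
Write the recurrence as `ω_{n+2} = ((2(n+1) - 2α²) ω_{n+1} + (α-1) n ω_n) / ((n+2)(α+1))`.
For `0 < α < 1` the pairs `(a, b) = (ω_{m-1}, ω_m)`, `m ≥ 2`, satisfy the invariant
`a < b ≤ (1-α) a` (which forces `a < 0`): it holds at `m = 2` because `ω_1 < 0` and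
`ω_2 = (1-α) ω_1`, and one step of the recurrence preserves it.
-/

namespace SFTR

lemma sftrW_add_two {α : ℝ} (hα : α ≠ 0) (n : ℕ) :
    sftrW α (n + 2) = ((2 * ((n : ℝ) + 1) - 2 * α ^ 2) * sftrW α (n + 1)
      + (α - 1) * n * sftrW α n) / (((n : ℝ) + 2) * (α + 1)) := by
  rw [sftrW]
  field_simp
  ring

lemma sftrW_one_neg {α : ℝ} (hα : 0 < α) : sftrW α 1 < 0 := by
  have hpow : 0 < (2 * α / (α + 1)) ^ (α + 1) := Real.rpow_pos_of_pos (by positivity) _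
  simp only [sftrW, neg_mul, neg_lt_zero]
  positivity

lemma sftrW_two {α : ℝ} (hα : 0 < α) : sftrW α 2 = (1 - α) * sftrW α 1 := by
  rw [sftrW_add_two hα.ne' 0]
  field_simp
  ring

lemma recurrence_step_lt_and_le {α N a b : ℝ} (hα0 : 0 < α) (hα1 : α < 1) (hN : 2 ≤ N)
    (hab : a < b) (hba : b ≤ (1 - α) * a) :
    b < ((2 * (N - 1) - 2 * α ^ 2) * b + (α - 1) * (N - 2) * a) / (N * (α + 1)) ∧
      ((2 * (N - 1) - 2 * α ^ 2) * b + (α - 1) * (N - 2) * a) / (N * (α + 1)) ≤ (1 - α) * b := by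
  have hD : 0 < N * (α + 1) := by positivity
  have ha : a < 0 := by nlinarith
  have hb : b < 0 := by nlinarith
  constructor
  · rw [lt_div_iff₀ hD]
    have hgap : ((2 * (N - 1) - 2 * α ^ 2) * b + (α - 1) * (N - 2) * a) - b * (N * (α + 1))
        = (1 - α) * (N - 2) * (b - a) - 2 * α * (1 + α) * b := by ring
    have h1 : 0 ≤ (1 - α) * (N - 2) * (b - a) :=
      mul_nonneg (mul_nonneg (by linarith) (by linarith)) (by linarith)
    have h2 : 2 * α * (1 + α) * b < 0 := mul_neg_of_pos_of_neg (by positivity) hb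
    linarith
  · rw [div_le_iff₀ hD]
    have hgap : (1 - α) * b * (N * (α + 1))
        - ((2 * (N - 1) - 2 * α ^ 2) * b + (α - 1) * (N - 2) * a)
        = (N - 2) * (((1 - α) * a - b) - α ^ 2 * b) := by ring
    have : 0 ≤ (N - 2) * (((1 - α) * a - b) - α ^ 2 * b) := by
      apply mul_nonneg (by linarith)
      nlinarith [sq_nonneg α]
    linarith

lemma sftrW_lt_and_le {α : ℝ} (hα0 : 0 < α) (hα1 : α < 1) (n : ℕ) :
    sftrW α (n + 1) < sftrW α (n + 2) ∧ sftrW α (n + 2) ≤ (1 - α) * sftrW α (n + 1) := by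
  induction n with
  | zero =>
    have h1 := sftrW_one_neg hα0
    rw [sftrW_two hα0]
    constructor <;> nlinarith
  | succ n ih =>
    have hN : (2 : ℝ) ≤ n + 3 := by linarith [n.cast_nonneg (α := ℝ)]
    have h := recurrence_step_lt_and_le hα0 hα1 hN ih.1 ih.2
    rw [sftrW_add_two hα0.ne' (n + 1)]
    push_cast
    ring_nf at h ⊢
    exact h

end SFTR

theorem sftrW_strict_mono (α : ℝ) (hα : α ∈ Set.Ioo (0 : ℝ) 1) :
    ∀ m : ℕ, 2 ≤ m → sftrW α (m - 1) < sftrW α m := by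
  intro m hm
  obtain ⟨n, rfl⟩ : ∃ n, m = n + 2 := ⟨m - 2, by omega⟩
  exact (SFTR.sftrW_lt_and_le hα.1 hα.2 n).1
end

section
/- The Cauchy product of the SFTR-1/2 weights (ω_m) and the sequence (θ_m) equals the coefficient sequence of 1 − ξ: setting c_m = Σ_{s=0}^{m} ω_s · θ_{m−s}, one has c_0 = 1, c_1 = −1, and c_m = 0 for every integer m ≥ 2. -/
/-- The sequence `θ_m`. -/
noncomputable def seqTheta (α : ℝ) : ℕ → ℝ
  | 0 => ((α + 1) / (2 * α)) ^ α
  | 1 => (α - 1) * (2 * α + 1) / (α + 1) * seqTheta α 0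
  | (m + 2) =>
      2 * α / (((m : ℝ) + 2) * (1 + α)) *
        (((((m : ℝ) + 2) - 1) / α - (1 - α) / (2 * α) * (2 * α + 1)) * seqTheta α (m + 1) +
          (1 - α) / (2 * α) * (3 - ((m : ℝ) + 2)) * seqTheta α m)

namespace PowerSeries

variable {R : Type*} [CommSemiring R]

theorem coeff_mk_mul_mk (f g : ℕ → R) (n : ℕ) :
    coeff n (mk f * mk g) = ∑ s ∈ Finset.range (n + 1), f s * g (n - s) := by
  simp [coeff_mul, Finset.Nat.sum_antidiagonal_eq_sum_range_succ_mk]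

theorem coeff_X_mul_derivative (f : R⟦X⟧) (n : ℕ) :
    coeff n (X * d⁄dX R f) = n * coeff n f := by
  rcases n with _ | n
  · simp
  · rw [coeff_succ_X_mul, coeff_derivative, mul_comm]
    push_cast
    rfl

theorem quadratic_mul_derivative_mk_of_recurrence {a b c d e : R} {u : ℕ → R}
    (h₀ : a * u 1 = d * u 0)
    (hrec : ∀ k : ℕ, a * ((k + 2) * u (k + 2)) + b * ((k + 1) * u (k + 1)) + c * (k * u k) =
      d * u (k + 1) + e * u k) :
    (C a + C b * X + C c * X ^ 2) * d⁄dX R (mk u) = (C d + C e * X) * mk u := by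
  ext n
  rcases n with _ | k
  · simp only [add_mul, mul_assoc, map_add, coeff_C_mul, coeff_zero_X_mul, coeff_derivative,
      coeff_mk]
    simpa using h₀
  · have hX2 : coeff (k + 1) (X ^ 2 * d⁄dX R (mk u)) = k * u k := by
      rw [pow_two, mul_assoc, coeff_succ_X_mul, coeff_X_mul_derivative, coeff_mk]
    simp only [add_mul, mul_assoc, map_add, coeff_C_mul, coeff_succ_X_mul, hX2,
      coeff_derivative, coeff_mk]
    push_cast
    convert hrec k using 2
    ring

theorem eq_C_mul_one_sub_X_of_one_sub_X_mul_derivative {K : Type*} [Field K] [CharZero K]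
    {f : K⟦X⟧} (h : (1 - X) * d⁄dX K f = -f) : f = C (constantCoeff f) * (1 - X) := by
  have hrec : ∀ n : ℕ, (n + 1) * coeff (n + 1) f = (n - 1) * coeff n f := by
    intro n
    have := congrArg (coeff n) h
    rw [sub_mul, one_mul, map_sub, coeff_X_mul_derivative, coeff_derivative, map_neg] at this
    linear_combination this
  have hvanish : ∀ n : ℕ, coeff (n + 2) f = 0 := by
    intro n
    induction n with
    | zero => simpa using hrec 1
    | succ n ih =>
      have h := hrec (n + 2)
      rw [ih, mul_zero] at h
      exact (mul_eq_zero.mp h).resolve_left (by exact_mod_cast Nat.succ_ne_zero (n + 2))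
  ext n
  rcases n with _ | _ | n
  · simp
  · simpa [coeff_X] using hrec 0
  · simp [hvanish, coeff_X, coeff_one]

end PowerSeries

open PowerSeries

section SFTR

variable {α : ℝ}

theorem quadratic_mul_derivative_mk_sftrW (hα : 0 < α) :
    (C (1 + α) + C (-2) * X + C (1 - α) * X ^ 2) * d⁄dX ℝ (mk (sftrW α)) =
      C (-2 * α ^ 2) * mk (sftrW α) := by
  have hbase : 0 < 2 * α / (α + 1) := by positivity
  have h₀ : (1 + α) * sftrW α 1 = -2 * α ^ 2 * sftrW α 0 := by
    rw [sftrW.eq_1, sftrW.eq_2, Real.rpow_add hbase, Real.rpow_one]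
    field_simp
    ring
  have hrec : ∀ k : ℕ, (1 + α) * ((k + 2) * sftrW α (k + 2)) + -2 * ((k + 1) * sftrW α (k + 1)) +
      (1 - α) * (k * sftrW α k) = -2 * α ^ 2 * sftrW α (k + 1) + 0 * sftrW α k := by
    intro k
    rw [sftrW.eq_3]
    field_simp
    ring
  simpa using quadratic_mul_derivative_mk_of_recurrence h₀ hrec

theorem quadratic_mul_derivative_mk_seqTheta (hα : 0 < α) :
    (C (1 + α) + C (-2) * X + C (1 - α) * X ^ 2) * d⁄dX ℝ (mk (seqTheta α)) =
      (C (-(1 - α) * (2 * α + 1)) + C (1 - α) * X) * mk (seqTheta α) := by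
  refine quadratic_mul_derivative_mk_of_recurrence ?_ fun k => ?_
  · rw [seqTheta.eq_2]
    field_simp
    ring
  · rw [seqTheta.eq_3]
    field_simp
    ring

theorem sftrW_zero_mul_seqTheta_zero (hα : 0 < α) : sftrW α 0 * seqTheta α 0 = 1 := by
  have hinv : 2 * α / (α + 1) * ((α + 1) / (2 * α)) = 1 := by field_simp
  rw [sftrW.eq_1, seqTheta.eq_1, ← Real.mul_rpow (by positivity) (by positivity), hinv,
    Real.one_rpow]

theorem mk_sftrW_mul_mk_seqTheta (hα : 0 < α) : mk (sftrW α) * mk (seqTheta α) = 1 - X := by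
  set W := mk (sftrW α)
  set Θ := mk (seqTheta α)
  set L : ℝ⟦X⟧ := C (1 + α) - C (1 - α) * X
  have hQ : C (1 + α) + C (-2) * X + C (1 - α) * X ^ 2 = L * (1 - X) := by
    simp only [L, map_add, map_sub, map_neg, map_one, map_ofNat]
    ring
  have hC : C (-2 * α ^ 2) + C (-(1 - α) * (2 * α + 1)) = -C (1 + α) := by
    rw [← map_add, ← map_neg]
    congr 1
    ring
  have hW := quadratic_mul_derivative_mk_sftrW hα
  have hΘ := quadratic_mul_derivative_mk_seqTheta hα
  rw [hQ] at hW hΘ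
  have hode : L * ((1 - X) * d⁄dX ℝ (W * Θ)) = L * -(W * Θ) := by
    rw [Derivation.leibniz, smul_eq_mul, smul_eq_mul]
    linear_combination W * hΘ + Θ * hW + W * Θ * hC
  have hL : L ≠ 0 := fun h => by
    have hL₀ : constantCoeff L = 1 + α := by simp [L]
    rw [h, map_zero] at hL₀
    linarith
  have h0 : constantCoeff (W * Θ) = 1 := by
    simpa [W, Θ] using sftrW_zero_mul_seqTheta_zero hα
  rw [eq_C_mul_one_sub_X_of_one_sub_X_mul_derivative (mul_left_cancel₀ hL hode), h0, map_one,
    one_mul]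

end SFTR

theorem cauchy_product_eq (α : ℝ) (hα : α ∈ Set.Ioo (0 : ℝ) 1) :
    (∑ s ∈ Finset.range 1, sftrW α s * seqTheta α (0 - s)) = 1 ∧
    (∑ s ∈ Finset.range 2, sftrW α s * seqTheta α (1 - s)) = -1 ∧
    ∀ m : ℕ, 2 ≤ m → (∑ s ∈ Finset.range (m + 1), sftrW α s * seqTheta α (m - s)) = 0 := by
  have hcoeff (m : ℕ) :
      ∑ s ∈ Finset.range (m + 1), sftrW α s * seqTheta α (m - s) = coeff m (1 - X : ℝ⟦X⟧) := by
    rw [← mk_sftrW_mul_mk_seqTheta hα.1, coeff_mk_mul_mk]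
  refine ⟨by simpa using hcoeff 0, by simpa [coeff_X] using hcoeff 1, fun m hm => ?_⟩
  rw [hcoeff, map_sub, coeff_one, coeff_X, if_neg (by omega), if_neg (by omega), sub_zero]
end
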